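/- The origin is a globally asymptotically stable equilibrium of the closed-loop quadrotor angular dynamics ẋ₁ = x₂, ẋ₂ = −1.5·x₄x₆ − 0.5·x₄·sin(x₂)cos(x₄) − x₁ − 2.5·x₂, ẋ₃ = x₄, ẋ₄ = 1.5·x₂x₆ + 0.5·x₂·sin(x₂)cos(x₄) − x₃ − 10·x₄, ẋ₅ = x₆, ẋ₆ = −x₅ − 0.8·x₆: the origin is stable, and every solution x : [0,∞) → ℝ⁶ satisfies x(t) → 0 as t → ∞. -/

import Mathlib

noncomputable def quadrotorField (x : EuclideanSpace ℝ (Fin 6)) :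
    EuclideanSpace ℝ (Fin 6) :=
  WithLp.toLp 2 ![x 1,
    -1.5 * x 3 * x 5 - 0.5 * x 3 * Real.sin (x 1) * Real.cos (x 3)
      - x 0 - 2.5 * x 1,
    x 3,
    1.5 * x 1 * x 5 + 0.5 * x 1 * Real.sin (x 1) * Real.cos (x 3)
      - x 2 - 10 * x 3,
    x 5,
    -x 4 - 0.8 * x 5]

/-! The energy `‖x‖²` is nonincreasing along solutions, since the gyroscopic terms cancel in
`⟪x, f x⟫ = -(5/2 x₁² + 10 x₃² + 4/5 x₅²)`; this gives stability with `δ = ε` and bounds the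
angles `x₀, x₂` by `R = ‖x 0‖` for all time. The energy dissipates only in the rates, so for
convergence it is tilted by the cross term `x₀x₁ + x₂x₃ + x₄x₅`: for `ε = 1 / (250 + 10 R)` the
function `V = ‖x‖² + 2ε (x₀x₁ + x₂x₃ + x₄x₅)` is comparable to `‖x‖²` and satisfies
`V' ≤ -(ε/4) V` on the whole forward orbit, so `‖x t‖²` decays exponentially. -/

open Real Filter Set Topology
open scoped InnerProductSpace

local notation "ℝ⁶" => EuclideanSpace ℝ (Fin 6)

theorem le_mul_exp_of_hasDerivAt_le_neg_mul {W W' : ℝ → ℝ} {k : ℝ}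
    (hW : ∀ t ≥ (0 : ℝ), HasDerivAt W (W' t) t) (hdecay : ∀ t ≥ (0 : ℝ), W' t ≤ -k * W t)
    {t : ℝ} (ht : 0 ≤ t) : W t ≤ W 0 * exp (-k * t) := by
  have hcont : ContinuousOn W (Icc 0 t) := fun s hs => (hW s hs.1).continuousAt.continuousWithinAt
  have := le_gronwallBound_of_liminf_deriv_right_le (K := -k) (ε := 0) hcont
    (fun s hs _ hr => (hW s hs.1).hasDerivWithinAt.liminf_right_slope_le hr) le_rfl
    (fun s hs => (add_zero (-k * W s)).symm ▸ hdecay s hs.1) t ⟨ht, le_rfl⟩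
  simpa [gronwallBound_ε0] using this

theorem norm_le_norm_zero_of_inner_deriv_nonpos {F : Type*} [NormedAddCommGroup F]
    [InnerProductSpace ℝ F] {x x' : ℝ → F} (hx : ∀ t ≥ (0 : ℝ), HasDerivAt x (x' t) t)
    (hinner : ∀ t ≥ (0 : ℝ), ⟪x t, x' t⟫_ℝ ≤ 0) {t : ℝ} (ht : 0 ≤ t) : ‖x t‖ ≤ ‖x 0‖ := by
  have := le_mul_exp_of_hasDerivAt_le_neg_mul (k := 0) (fun s hs => (hx s hs).norm_sq)
    (fun s hs => by nlinarith [hinner s hs]) ht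
  simp only [neg_zero, zero_mul, exp_zero, mul_one] at this
  exact (pow_le_pow_iff_left₀ (norm_nonneg _) (norm_nonneg _) two_ne_zero).mp this

theorem inner_quadrotorField (y : ℝ⁶) :
    ⟪y, quadrotorField y⟫_ℝ = -(5 / 2 * y 1 ^ 2 + 10 * y 3 ^ 2 + 4 / 5 * y 5 ^ 2) := by
  simp only [quadrotorField, PiLp.inner_apply, RCLike.inner_apply, conj_trivial, Fin.sum_univ_six,
    Matrix.cons_val_zero, Matrix.cons_val_one, Matrix.cons_val]
  ring

def quadrotorCross (y : ℝ⁶) : ℝ := y 0 * y 1 + y 2 * y 3 + y 4 * y 5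

theorem abs_quadrotorCross_le (y : ℝ⁶) : |quadrotorCross y| ≤ ‖y‖ ^ 2 / 2 := by
  rw [EuclideanSpace.real_norm_sq_eq, Fin.sum_univ_six, quadrotorCross, abs_le]
  constructor
  · nlinarith [sq_nonneg (y 0 + y 1), sq_nonneg (y 2 + y 3), sq_nonneg (y 4 + y 5)]
  · nlinarith [sq_nonneg (y 0 - y 1), sq_nonneg (y 2 - y 3), sq_nonneg (y 4 - y 5)]

def quadrotorCrossDeriv (y v : ℝ⁶) : ℝ :=
  v 0 * y 1 + y 0 * v 1 + v 2 * y 3 + y 2 * v 3 + v 4 * y 5 + y 4 * v 5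

theorem hasDerivAt_quadrotorCross {x : ℝ → ℝ⁶} {v : ℝ⁶} {t : ℝ} (hx : HasDerivAt x v t) :
    HasDerivAt (fun s => quadrotorCross (x s)) (quadrotorCrossDeriv (x t) v) t := by
  have h i : HasDerivAt (fun s => x s i) (v i) t :=
    (EuclideanSpace.proj (𝕜 := ℝ) i).hasFDerivAt.comp_hasDerivAt t hx
  refine (((h 0).mul (h 1)).add ((h 2).mul (h 3))).add ((h 4).mul (h 5)) |>.congr_deriv ?_
  rw [quadrotorCrossDeriv]
  ring

theorem two_mul_mul_mul_le_of_abs_le {a b c R : ℝ} (ha : |a| ≤ R) :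
    2 * (a * b * c) ≤ R * (b ^ 2 + c ^ 2) := by
  obtain ⟨hl, hr⟩ := abs_le.mp ha
  nlinarith [mul_nonneg (sub_nonneg.2 hr) (sq_nonneg (b - c)),
    mul_nonneg (neg_le_iff_add_nonneg.1 hl) (sq_nonneg (b + c))]

-- Young's inequality on every mixed term; the cubic gyroscopic terms are controlled through
-- `|y 0|, |y 2| ≤ R` and the `sin * cos` ones through `|sin * cos| ≤ 1`.
theorem quadrotorCrossDeriv_le {R : ℝ} {y : ℝ⁶} (h0 : |y 0| ≤ R) (h2 : |y 2| ≤ R) :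
    quadrotorCrossDeriv y (quadrotorField y) ≤
      -(y 0 ^ 2 + y 2 ^ 2 + y 4 ^ 2) / 4 + (8 + R) * y 1 ^ 2 + (102 + R) * y 3 ^ 2
        + (2 + 2 * R) * y 5 ^ 2 := by
  set S := sin (y 1) * cos (y 3) with hS_def
  have hS : |S| ≤ 1 := by
    rw [abs_mul]; exact mul_le_one₀ (abs_sin_le_one _) (abs_nonneg _) (abs_cos_le_one _)
  have hfield : quadrotorCrossDeriv y (quadrotorField y) =
      y 1 ^ 2 + y 3 ^ 2 + y 5 ^ 2 - y 0 ^ 2 - y 2 ^ 2 - y 4 ^ 2 - 2.5 * (y 0 * y 1)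
        - 10 * (y 2 * y 3) - 0.8 * (y 4 * y 5) - 1.5 * (y 0 * y 3 * y 5)
        + 1.5 * (y 2 * y 1 * y 5) - 0.5 * (y 0 * y 3 * S) + 0.5 * (y 2 * y 1 * S) := by
    simp only [quadrotorCrossDeriv, quadrotorField, Matrix.cons_val_zero, Matrix.cons_val_one,
      Matrix.cons_val, hS_def]
    ring
  have hR : 0 ≤ R := (abs_nonneg _).trans h0
  rw [hfield]
  linarith [sq_nonneg (y 0 / 2 + 2.5 * y 1), sq_nonneg (y 2 / 2 + 10 * y 3),
    sq_nonneg (y 4 / 2 + 0.8 * y 5),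
    two_mul_mul_mul_le_of_abs_le (b := y 3) (c := y 5) ((abs_neg (y 0)).trans_le h0),
    two_mul_mul_mul_le_of_abs_le (b := y 1) (c := y 5) h2,
    two_mul_mul_mul_le_of_abs_le (b := y 0) (c := y 3) ((abs_neg S).trans_le hS),
    two_mul_mul_mul_le_of_abs_le (b := y 2) (c := y 1) hS,
    sq_nonneg (y 0), sq_nonneg (y 1), sq_nonneg (y 2), sq_nonneg (y 3), sq_nonneg (y 4),
    sq_nonneg (y 5), mul_nonneg hR (sq_nonneg (y 1)), mul_nonneg hR (sq_nonneg (y 3)),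
    mul_nonneg hR (sq_nonneg (y 5))]

noncomputable def quadrotorLyapunov (ε : ℝ) (y : ℝ⁶) : ℝ := ‖y‖ ^ 2 + 2 * ε * quadrotorCross y

theorem quadrotorLyapunov_le {ε : ℝ} (hε : 0 ≤ ε) (y : ℝ⁶) :
    quadrotorLyapunov ε y ≤ (1 + ε) * ‖y‖ ^ 2 := by
  have := (abs_le.mp (abs_quadrotorCross_le y)).2
  rw [quadrotorLyapunov]
  nlinarith

theorem le_quadrotorLyapunov {ε : ℝ} (hε : 0 ≤ ε) (y : ℝ⁶) :
    (1 - ε) * ‖y‖ ^ 2 ≤ quadrotorLyapunov ε y := by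
  have := (abs_le.mp (abs_quadrotorCross_le y)).1
  rw [quadrotorLyapunov]
  nlinarith

theorem hasDerivAt_quadrotorLyapunov (ε : ℝ) {x : ℝ → ℝ⁶} {v : ℝ⁶} {t : ℝ}
    (hx : HasDerivAt x v t) :
    HasDerivAt (fun s => quadrotorLyapunov ε (x s))
      (2 * ⟪x t, v⟫_ℝ + 2 * ε * quadrotorCrossDeriv (x t) v) t :=
  hx.norm_sq.add ((hasDerivAt_quadrotorCross hx).const_mul (2 * ε))

theorem quadrotorLyapunov_deriv_le {R ε : ℝ} (hε : 0 < ε) (hεR : ε * (250 + 10 * R) ≤ 1)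
    {y : ℝ⁶} (h0 : |y 0| ≤ R) (h2 : |y 2| ≤ R) :
    2 * ⟪y, quadrotorField y⟫_ℝ + 2 * ε * quadrotorCrossDeriv y (quadrotorField y) ≤
      -(ε / 4) * quadrotorLyapunov ε y := by
  have hR : 0 ≤ R := (abs_nonneg _).trans h0
  have hRε : 0 ≤ ε * R := mul_nonneg hε.le hR
  have hε1 : ε ≤ 1 := by nlinarith
  have hnorm := EuclideanSpace.real_norm_sq_eq y
  rw [Fin.sum_univ_six] at hnorm
  calc 2 * ⟪y, quadrotorField y⟫_ℝ + 2 * ε * quadrotorCrossDeriv y (quadrotorField y)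
      ≤ -(5 * y 1 ^ 2 + 20 * y 3 ^ 2 + 1.6 * y 5 ^ 2) + 2 * ε *
          (-(y 0 ^ 2 + y 2 ^ 2 + y 4 ^ 2) / 4 + (8 + R) * y 1 ^ 2 + (102 + R) * y 3 ^ 2
            + (2 + 2 * R) * y 5 ^ 2) := by
        rw [inner_quadrotorField]
        linarith [mul_le_mul_of_nonneg_left (quadrotorCrossDeriv_le h0 h2) hε.le]
    _ ≤ -(ε / 2) * ‖y‖ ^ 2 := by
        rw [hnorm]
        nlinarith [mul_nonneg (by nlinarith : (0 : ℝ) ≤ 5 - ε * (16.5 + 2 * R)) (sq_nonneg (y 1)),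
          mul_nonneg (by nlinarith : (0 : ℝ) ≤ 20 - ε * (204.5 + 2 * R)) (sq_nonneg (y 3)),
          mul_nonneg (by nlinarith : (0 : ℝ) ≤ 1.6 - ε * (4.5 + 4 * R)) (sq_nonneg (y 5))]
    _ ≤ -(ε / 4) * ((1 + ε) * ‖y‖ ^ 2) := by
        nlinarith [mul_nonneg (mul_nonneg hε.le (sub_nonneg.2 hε1)) (sq_nonneg ‖y‖)]
    _ ≤ -(ε / 4) * quadrotorLyapunov ε y := by
        nlinarith [quadrotorLyapunov_le hε.le y]

theorem tendsto_nhds_zero_of_norm_sq_le_mul_exp {E : Type*} [NormedAddCommGroup E]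
    {x : ℝ → E} {C k : ℝ} (hk : 0 < k) (hx : ∀ t ≥ (0 : ℝ), ‖x t‖ ^ 2 ≤ C * exp (-k * t)) :
    Tendsto x atTop (𝓝 0) := by
  have hexp : Tendsto (fun t => C * exp (-k * t)) atTop (𝓝 0) := by
    simpa using (tendsto_rpow_mul_exp_neg_mul_atTop_nhds_zero 0 k hk).const_mul C
  have hsq : Tendsto (fun t => ‖x t‖ ^ 2) atTop (𝓝 0) :=
    squeeze_zero' (Eventually.of_forall fun t => by positivity)
      (eventually_atTop.2 ⟨0, hx⟩) hexp
  rw [tendsto_zero_iff_norm_tendsto_zero]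
  simpa [sqrt_sq (norm_nonneg _)] using hsq.sqrt

theorem quadrotor_norm_le_norm_zero {x : ℝ → ℝ⁶}
    (hx : ∀ t ≥ (0 : ℝ), HasDerivAt x (quadrotorField (x t)) t) {t : ℝ} (ht : 0 ≤ t) :
    ‖x t‖ ≤ ‖x 0‖ :=
  norm_le_norm_zero_of_inner_deriv_nonpos hx
    (fun s _ => by rw [inner_quadrotorField]; exact neg_nonpos.2 (by positivity)) ht

theorem quadrotor_exists_norm_sq_le_mul_exp {x : ℝ → ℝ⁶}
    (hx : ∀ t ≥ (0 : ℝ), HasDerivAt x (quadrotorField (x t)) t) :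
    ∃ k > 0, ∀ t ≥ (0 : ℝ), ‖x t‖ ^ 2 ≤ 3 * ‖x 0‖ ^ 2 * exp (-k * t) := by
  set R := ‖x 0‖
  set ε := 1 / (250 + 10 * R)
  have hε : 0 < ε := by positivity
  have hεR : ε * (250 + 10 * R) ≤ 1 := (one_div_mul_cancel (by positivity)).le
  have hε2 : ε ≤ 1 / 2 := by simp only [ε]; gcongr; linarith [norm_nonneg (x 0)]
  have hcoord t (ht : 0 ≤ t) (i : Fin 6) : |x t i| ≤ R :=
    (PiLp.norm_apply_le (x t) i).trans (quadrotor_norm_le_norm_zero hx ht)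
  have hdecay t (ht : 0 ≤ t) := le_mul_exp_of_hasDerivAt_le_neg_mul
    (fun s hs => hasDerivAt_quadrotorLyapunov ε (hx s hs))
    (fun s hs => quadrotorLyapunov_deriv_le hε hεR (hcoord s hs 0) (hcoord s hs 2)) ht
  refine ⟨ε / 4, by positivity, fun t ht => ?_⟩
  calc ‖x t‖ ^ 2 ≤ 2 * quadrotorLyapunov ε (x t) := by
        nlinarith [le_quadrotorLyapunov hε.le (x t), sq_nonneg ‖x t‖]
    _ ≤ 2 * (quadrotorLyapunov ε (x 0) * exp (-(ε / 4) * t)) := by gcongr; exact hdecay t ht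
    _ ≤ 2 * (3 / 2 * R ^ 2 * exp (-(ε / 4) * t)) := by
        gcongr
        exact (quadrotorLyapunov_le hε.le (x 0)).trans (by gcongr; linarith)
    _ = 3 * R ^ 2 * exp (-(ε / 4) * t) := by ring

/-- The origin is a globally asymptotically stable equilibrium of the closed-loop
quadrotor angular dynamics: the origin is stable, and every solution converges to the
origin as `t → ∞`. -/
theorem quadrotor_globally_asymptotically_stable :
    (∀ ε > (0 : ℝ), ∃ δ > (0 : ℝ), ∀ x : ℝ → EuclideanSpace ℝ (Fin 6),
      (∀ t ≥ (0:ℝ), HasDerivAt x (quadrotorField (x t)) t) → ‖x 0‖ < δ →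
        ∀ t ≥ (0:ℝ), ‖x t‖ < ε) ∧
    (∀ x : ℝ → EuclideanSpace ℝ (Fin 6),
      (∀ t ≥ (0:ℝ), HasDerivAt x (quadrotorField (x t)) t) →
        Filter.Tendsto x Filter.atTop (nhds 0)) := by
  refine ⟨fun ε hε => ⟨ε, hε, fun x hx h0 t ht => (quadrotor_norm_le_norm_zero hx ht).trans_lt h0⟩,
    fun x hx => ?_⟩
  obtain ⟨k, hk, hbound⟩ := quadrotor_exists_norm_sq_le_mul_exp hx
  exact tendsto_nhds_zero_of_norm_sq_le_mul_exp hk hbound
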